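/- Suppose G satisfies the doubled crystal axioms and w → z is an edge labeled 1 or 1'. Then the {2,2'}-string through w is collapsed with φ_2(z) = φ_2(w) + 1 if and only if the {2,2'}-string through z is collapsed with φ_2(z) = φ_2(w) + 1. Moreover, if φ_2(z) = φ_2(w), then the {2,2'}-string through z is separated. -/
import Mathlib


/-- A "doubled crystal": a finite directed graph with vertices weighted by
`ℤ_{≥0}^n` and edges labeled `1', 1, …, (n-1)', n-1`, satisfying the axioms
(B1)–(B3), (K), (A1)–(A8) and the dual axioms (A1*)–(A8*) of
Gillespie–Levinson's "Axioms for shifted tableau crystals".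

`F i false` is the unprimed lowering operator `f_i`, `F i true` is the primed
lowering operator `f_i'`; similarly for the raising operators `E`.  The
statistics `eps, phi` are the total distances to the top and bottom of the
`{i,i'}`-string; `epsP, phiP` count only primed edges and `epsH, phiH`
count only unprimed edges. -/
structure DoubledCrystal (n : ℕ) where
  B : Type
  fintype : Fintype B
  F : Fin (n - 1) → Bool → B → Option B
  E : Fin (n - 1) → Bool → B → Option B
  wt : B → Fin n → ℕ
  eps : Fin (n - 1) → B → ℕ
  phi : Fin (n - 1) → B → ℕ
  epsP : Fin (n - 1) → B → ℕ
  phiP : Fin (n - 1) → B → ℕ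
  epsH : Fin (n - 1) → B → ℕ
  phiH : Fin (n - 1) → B → ℕ
  /-- `e_i, f_i` (and `e_i', f_i'`) are partial inverses. -/
  inverse : ∀ (i : Fin (n - 1)) (p : Bool) (x y : B),
    F i p x = some y ↔ E i p y = some x
  /-- (K1): effect of a raising operator on the weight. -/
  K1wt : ∀ (i : Fin (n - 1)) (p : Bool) (x y : B), E i p x = some y →
    ∀ j : Fin n, (wt y j : ℤ) = (wt x j : ℤ) +
      (if (j : ℕ) = (i : ℕ) then 1 else if (j : ℕ) = (i : ℕ) + 1 then -1 else 0)
  /-- (K1): effect of a raising operator on the statistics `ε_i, φ_i`. -/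
  K1len : ∀ (i : Fin (n - 1)) (p : Bool) (x y : B), E i p x = some y →
    eps i y + 1 = eps i x ∧ phi i y = phi i x + 1
  /-- (K2): `φ_i(x) - ε_i(x) = wt_i(x) - wt_{i+1}(x)`. -/
  K2 : ∀ (i : Fin (n - 1)) (x : B),
    (phi i x : ℤ) - (eps i x : ℤ) =
      (wt x ⟨(i : ℕ), by have := i.isLt; omega⟩ : ℤ) -
      (wt x ⟨(i : ℕ) + 1, by have := i.isLt; omega⟩ : ℤ)
  /-- The unprimed/primed lowering operators are defined iff `φ̂_i`/`φ'_i` is positive. -/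
  F_none : ∀ (i : Fin (n - 1)) (x : B),
    (F i false x = none ↔ phiH i x = 0) ∧ (F i true x = none ↔ phiP i x = 0)
  /-- The unprimed/primed raising operators are defined iff `ε̂_i`/`ε'_i` is positive. -/
  E_none : ∀ (i : Fin (n - 1)) (x : B),
    (E i false x = none ↔ epsH i x = 0) ∧ (E i true x = none ↔ epsP i x = 0)
  /-- Along an unprimed `i`-edge, the unprimed statistics shift by one. -/
  Fstep : ∀ (i : Fin (n - 1)) (x y : B), F i false x = some y →
    epsH i y = epsH i x + 1 ∧ phiH i x = phiH i y + 1
  /-- Along a primed `i`-edge, the primed statistics shift by one. -/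
  FstepP : ∀ (i : Fin (n - 1)) (x y : B), F i true x = some y →
    epsP i y = epsP i x + 1 ∧ phiP i x = phiP i y + 1
  /-- Along a strictly unprimed `i`-edge (separated string), the primed statistics
  do not change. -/
  Fsep : ∀ (i : Fin (n - 1)) (x y : B), F i false x = some y → F i true x ≠ some y →
    epsP i y = epsP i x ∧ phiP i y = phiP i x
  /-- Along a strictly primed `i`-edge (separated string), the unprimed statistics
  do not change. -/
  FsepP : ∀ (i : Fin (n - 1)) (x y : B), F i true x = some y → F i false x ≠ some y →
    epsH i y = epsH i x ∧ phiH i y = phiH i x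
  /-- (B1): every vertex lies either on a collapsed `{i,i'}`-string (all edges both
  primed and unprimed, all statistics equal, with top/bottom characterized by
  the vanishing of `wt_{i+1}`/`wt_i`), or on a separated string (total statistics
  split into primed and unprimed parts, with exactly one primed edge between
  the top and the bottom). -/
  B1 : ∀ (i : Fin (n - 1)) (v : B),
    (F i false v = F i true v ∧ E i false v = E i true v ∧
      epsP i v = eps i v ∧ epsH i v = eps i v ∧
      phiP i v = phi i v ∧ phiH i v = phi i v ∧
      (eps i v = 0 ↔ wt v ⟨(i : ℕ) + 1, by have := i.isLt; omega⟩ = 0) ∧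
      (phi i v = 0 ↔ wt v ⟨(i : ℕ), by have := i.isLt; omega⟩ = 0)) ∨
    (eps i v = epsP i v + epsH i v ∧ phi i v = phiP i v + phiH i v ∧
      epsP i v + phiP i v = 1)
  /-- (B1): if `wt_{i+1}(v) = 0` then `v` is the top of a collapsed `{i,i'}`-string. -/
  B1top : ∀ (i : Fin (n - 1)) (v : B),
    wt v ⟨(i : ℕ) + 1, by have := i.isLt; omega⟩ = 0 →
      eps i v = 0 ∧ F i false v = F i true v
  /-- (B1): if `wt_i(v) = 0` then `v` is the bottom of a collapsed `{i,i'}`-string. -/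
  B1bot : ∀ (i : Fin (n - 1)) (v : B),
    wt v ⟨(i : ℕ), by have := i.isLt; omega⟩ = 0 →
      phi i v = 0 ∧ E i false v = E i true v
  /-- (B2): distant edges commute (lowering). -/
  B2f : ∀ (i j : Fin (n - 1)) (p q : Bool) (w x y : B),
    ((i : ℕ) + 1 < (j : ℕ) ∨ (j : ℕ) + 1 < (i : ℕ)) →
    F i p w = some x → F j q w = some y →
    ∃ z, F j q x = some z ∧ F i p y = some z
  /-- (B2): distant edges commute (raising). -/
  B2e : ∀ (i j : Fin (n - 1)) (p q : Bool) (w x y : B),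
    ((i : ℕ) + 1 < (j : ℕ) ∨ (j : ℕ) + 1 < (i : ℕ)) →
    E i p w = some x → E j q w = some y →
    ∃ z, E j q x = some z ∧ E i p y = some z
  /-- (B3): the lengths axiom for an `(i±1)`- or `(i±1)'`-edge `z → w`. -/
  B3 : ∀ (i j : Fin (n - 1)) (p : Bool) (z w : B),
    ((i : ℕ) = (j : ℕ) + 1 ∨ (j : ℕ) = (i : ℕ) + 1) →
    F j p z = some w →
    (eps i w = eps i z ∧ phi i w = phi i z + 1) ∨
    (eps i w + 1 = eps i z ∧ phi i w = phi i z)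
  /-- (A1) Primed square. -/
  A1 : ∀ (i j : Fin (n - 1)) (w x y : B), (i : ℕ) + 1 = (j : ℕ) →
    F i true w = some x → F j true w = some y →
    ∃ z, F j true x = some z ∧ F i true y = some z
  /-- (A2) Half-solid square. -/
  A2 : ∀ (i j : Fin (n - 1)) (w x y : B), (i : ℕ) + 1 = (j : ℕ) →
    F i true w = some x → F j true w = some y →
    (((∃ z, F j false x = some z ∧ F i false y = some z) ∧
        F i true y ≠ F i false y) ↔
      (eps i w = eps i y ∧ eps j w = eps j x ∧ phi j w = 1 ∧ phiH j w = 0))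
  /-- (A3) Square for `{f_i', f_{i+1}}`. -/
  A3 : ∀ (i j : Fin (n - 1)) (w x y : B), (i : ℕ) + 1 = (j : ℕ) →
    F i true w = some x → F j false w = some y →
    (F j true w ≠ some y ∨ F i false w ≠ some x) →
    ∃ z, F j false x = some z ∧ F i true y = some z
  /-- (A4) Square for `{f_i, f_{i+1}'}`. -/
  A4 : ∀ (i j : Fin (n - 1)) (w x y : B), (i : ℕ) + 1 = (j : ℕ) →
    F i false w = some x → F j true w = some y →
    ((∃ z, F j true x = some z ∧ F i false y = some z) ↔ 0 < epsH i w)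
  /-- (A5) Half-primed square. -/
  A5 : ∀ (i j : Fin (n - 1)) (w x y : B), (i : ℕ) + 1 = (j : ℕ) →
    F i false w = some x → F j false w = some y → F i true w = none →
    ((∃ z, F j true x = some z ∧ F i true y = some z) ↔
      (eps i w = eps i y + 1 ∧ eps j w = eps j x + 1))
  /-- (A6) Square. -/
  A6 : ∀ (i j : Fin (n - 1)) (w x y : B), (i : ℕ) + 1 = (j : ℕ) →
    F i false w = some x → F j false w = some y → F i true w = none →
    ((∃ z, F j false x = some z ∧ F i false y = some z) ↔
      ((eps i w = eps i y + 1 ∧ eps j w = eps j x) ∨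
       (eps i w = eps i y ∧ eps j w = eps j x + 1)))
  /-- (A7) Half-primed octagon. -/
  A7 : ∀ (i j : Fin (n - 1)) (w x y : B), (i : ℕ) + 1 = (j : ℕ) →
    F i false w = some x → F j false w = some y → F i true w = none →
    (((∃ z, ((F i false y).bind (F i true)).bind (F j false) = some z ∧
            ((F j false x).bind (F j false)).bind (F i true) = some z) ∧
        F j false x ≠ F i false y) ↔
      (eps i w = eps i y ∧ eps j w = eps j x ∧ epsH i w + 1 = epsH i y))
  /-- (A8) Octagon. -/
  A8 : ∀ (i j : Fin (n - 1)) (w x y : B), (i : ℕ) + 1 = (j : ℕ) →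
    F i false w = some x → F j false w = some y → F i true w = none →
    (((∃ z, ((F i false y).bind (F i false)).bind (F j false) = some z ∧
            ((F j false x).bind (F j false)).bind (F i false) = some z) ∧
        F j false x ≠ F i false y) ↔
      (eps i w = eps i y ∧ eps j w = eps j x ∧ 2 ≤ phiH i y))
  /-- (A1*) Dual primed square. -/
  A1d : ∀ (i j : Fin (n - 1)) (w x y : B), (i : ℕ) + 1 = (j : ℕ) →
    E j true w = some x → E i true w = some y →
    ∃ z, E i true x = some z ∧ E j true y = some z
  /-- (A2*) Dual half-solid square. -/
  A2d : ∀ (i j : Fin (n - 1)) (w x y : B), (i : ℕ) + 1 = (j : ℕ) →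
    E j true w = some x → E i true w = some y →
    (((∃ z, E j false y = some z ∧ E i false x = some z) ∧
        E j true y ≠ E j false y) ↔
      (phi j w = phi j y ∧ phi i w = phi i x ∧ eps i w = 1 ∧ epsH i w = 0))
  /-- (A3*) Dual square for `{e_{i+1}', e_i}`. -/
  A3d : ∀ (i j : Fin (n - 1)) (w x y : B), (i : ℕ) + 1 = (j : ℕ) →
    E j true w = some x → E i false w = some y →
    (E i true w ≠ some y ∨ E j false w ≠ some x) →
    ∃ z, E i false x = some z ∧ E j true y = some z
  /-- (A4*) Dual square for `{e_{i+1}, e_i'}`. -/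
  A4d : ∀ (i j : Fin (n - 1)) (w x y : B), (i : ℕ) + 1 = (j : ℕ) →
    E j false w = some x → E i true w = some y →
    ((∃ z, E i true x = some z ∧ E j false y = some z) ↔ 0 < phiH j w)
  /-- (A5*) Dual half-primed square. -/
  A5d : ∀ (i j : Fin (n - 1)) (w x y : B), (i : ℕ) + 1 = (j : ℕ) →
    E j false w = some x → E i false w = some y → E j true w = none →
    ((∃ z, E j true y = some z ∧ E i true x = some z) ↔
      (phi j w = phi j y + 1 ∧ phi i w = phi i x + 1))
  /-- (A6*) Dual square. -/
  A6d : ∀ (i j : Fin (n - 1)) (w x y : B), (i : ℕ) + 1 = (j : ℕ) →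
    E j false w = some x → E i false w = some y → E j true w = none →
    ((∃ z, E j false y = some z ∧ E i false x = some z) ↔
      ((phi j w = phi j y + 1 ∧ phi i w = phi i x) ∨
       (phi j w = phi j y ∧ phi i w = phi i x + 1)))
  /-- (A7*) Dual half-primed octagon. -/
  A7d : ∀ (i j : Fin (n - 1)) (w x y : B), (i : ℕ) + 1 = (j : ℕ) →
    E j false w = some x → E i false w = some y → E j true w = none →
    (((∃ z, ((E j false y).bind (E j true)).bind (E i false) = some z ∧
            ((E i false x).bind (E i false)).bind (E j true) = some z) ∧
        E j false y ≠ E i false x) ↔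
      (phi j w = phi j y ∧ phi i w = phi i x ∧ phiH j w + 1 = phiH j y))
  /-- (A8*) Dual octagon. -/
  A8d : ∀ (i j : Fin (n - 1)) (w x y : B), (i : ℕ) + 1 = (j : ℕ) →
    E j false w = some x → E i false w = some y → E j true w = none →
    (((∃ z, ((E j false y).bind (E j false)).bind (E i false) = some z ∧
            ((E i false x).bind (E i false)).bind (E j false) = some z) ∧
        E j false y ≠ E i false x) ↔
      (phi j w = phi j y ∧ phi i w = phi i x ∧ 2 ≤ epsH j y))

namespace DoubledCrystal

variable {n : ℕ}

/-- One step along an `{i,i'}`-edge. -/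
def stringStep (C : DoubledCrystal n) (i : Fin (n - 1)) (x y : C.B) : Prop :=
  ∃ p, C.F i p x = some y

/-- `u` lies on the `{i,i'}`-string through `v`. -/
def SameString (C : DoubledCrystal n) (i : Fin (n - 1)) (v u : C.B) : Prop :=
  Relation.EqvGen (C.stringStep i) v u

/-- The `{i,i'}`-string through `v` is collapsed: every unprimed edge on it
coincides with the corresponding primed edge. -/
def Collapsed (C : DoubledCrystal n) (i : Fin (n - 1)) (v : C.B) : Prop :=
  ∀ u, C.SameString i v u → C.F i false u = C.F i true u

/-- One step along any edge of the graph. -/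
def step (C : DoubledCrystal n) (x y : C.B) : Prop :=
  ∃ i p, C.F i p x = some y

end DoubledCrystal

namespace DoubledCrystal

variable {n : ℕ} (C : DoubledCrystal n)

/-- Coordinate `i+1`. -/
def co (i : Fin (n - 1)) : Fin n := ⟨(i : ℕ) + 1, by have := i.isLt; omega⟩

lemma estep (i : Fin (n - 1)) (p : Bool) (x y : C.B) (h : C.E i p x = some y) :
    C.eps i y + 1 = C.eps i x ∧ C.phi i y = C.phi i x + 1 ∧
      C.wt y (co i) + 1 = C.wt x (co i) := by
  have h1 := C.K1len i p x y h
  have h2 := C.K1wt i p x y h (co i)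
  have hco : ((co i : Fin n) : ℕ) = (i : ℕ) + 1 := rfl
  rw [hco, if_neg (by omega), if_pos rfl] at h2
  exact ⟨h1.1, h1.2, by omega⟩

lemma fstep' (i : Fin (n - 1)) (p : Bool) (x y : C.B) (h : C.F i p x = some y) :
    C.eps i y = C.eps i x + 1 ∧ C.phi i x = C.phi i y + 1 ∧
      C.wt y (co i) = C.wt x (co i) + 1 := by
  have h' := (C.inverse i p x y).mp h
  have := C.estep i p y x h'
  omega

lemma parent_exists (i : Fin (n - 1)) (v : C.B) (h : 0 < C.eps i v) :
    ∃ p t, C.E i p v = some t := by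
  by_contra hc
  push_neg at hc
  have hf : C.E i false v = none := by
    cases hE : C.E i false v with
    | none => rfl
    | some t => exact absurd hE (hc false t)
  have ht : C.E i true v = none := by
    cases hE : C.E i true v with
    | none => rfl
    | some t => exact absurd hE (hc true t)
  have h1 : C.epsH i v = 0 := ((C.E_none i v).1).mp hf
  have h2 : C.epsP i v = 0 := ((C.E_none i v).2).mp ht
  rcases C.B1 i v with ⟨_, _, _, h4, _⟩ | ⟨h3, _, _⟩ <;> omega

lemma eps_le_wt (i : Fin (n - 1)) :
    ∀ (k : ℕ) (v : C.B), C.eps i v = k → C.eps i v ≤ C.wt v (co i) := by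
  intro k
  induction k with
  | zero => intro v hv; omega
  | succ k ih =>
    intro v hv
    obtain ⟨p, t, ht⟩ := C.parent_exists i v (by omega)
    have h1 := C.estep i p v t ht
    have h2 := ih t (by omega)
    omega

/-- Key pointwise lemma: if `wt_{i+1}(v) = ε_i(v)` then the primed/unprimed
statistics agree at `v` and `f_i v = f_i' v`. -/
lemma collapse_pointwise (i : Fin (n - 1)) :
    ∀ (k : ℕ) (v : C.B), C.eps i v = k → C.wt v (co i) = C.eps i v →
      C.epsP i v = C.eps i v ∧ C.epsH i v = C.eps i v ∧
        C.F i false v = C.F i true v := by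
  intro k
  induction k with
  | zero =>
    intro v hv hw
    have hF := (C.B1top i v (by rw [show (⟨(i : ℕ) + 1, by have := i.isLt; omega⟩ : Fin n) = co i from rfl]; omega)).2
    have h1 : C.epsH i v = 0 := by
      cases hE : C.E i false v with
      | none => exact ((C.E_none i v).1).mp hE
      | some t => have := C.estep i false v t hE; omega
    have h2 : C.epsP i v = 0 := by
      cases hE : C.E i true v with
      | none => exact ((C.E_none i v).2).mp hE
      | some t => have := C.estep i true v t hE; omega
    exact ⟨by omega, by omega, hF⟩
  | succ k ih =>
    intro v hv hw
    obtain ⟨p, t, ht⟩ := C.parent_exists i v (by omega)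
    have h1 := C.estep i p v t ht
    have h2 := ih t (by omega) (by omega)
    have hFt : C.F i p t = some v := (C.inverse i p t v).mpr ht
    have hFf : C.F i false t = some v := by
      cases p with
      | false => exact hFt
      | true => rw [h2.2.2]; exact hFt
    have hFp : C.F i true t = some v := by
      cases p with
      | false => rw [← h2.2.2]; exact hFt
      | true => exact hFt
    have h3 := C.Fstep i t v hFf
    have h4 := C.FstepP i t v hFp
    refine ⟨by omega, by omega, ?_⟩
    rcases C.B1 i v with ⟨hFeq, _⟩ | ⟨h5, _, _⟩
    · exact hFeq
    · omega

/-- `wt_{i+1} - ε_i` is constant along an `{i,i'}`-string. -/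
lemma D_const (i : Fin (n - 1)) (v u : C.B) (h : C.SameString i v u) :
    (C.wt u (co i) : ℤ) - C.eps i u = (C.wt v (co i) : ℤ) - C.eps i v := by
  induction h with
  | rel x y hxy =>
    obtain ⟨p, hp⟩ := hxy
    have := C.fstep' i p x y hp
    omega
  | refl x => rfl
  | symm x y _ ih => omega
  | trans x y z _ _ ih1 ih2 => omega

lemma collapsed_of_wt (i : Fin (n - 1)) (v : C.B) (h : C.wt v (co i) = C.eps i v) :
    C.Collapsed i v := by
  intro u hu
  have hD := C.D_const i v u hu
  exact (C.collapse_pointwise i (C.eps i u) u rfl (by omega)).2.2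

lemma phi_le_phiP (i : Fin (n - 1)) :
    ∀ (k : ℕ) (u : C.B), C.phi i u = k → C.Collapsed i u → C.phi i u ≤ C.phiP i u := by
  intro k
  induction k with
  | zero => intro u hu _; omega
  | succ k ih =>
    intro u hu hcol
    have hFeq : C.F i false u = C.F i true u :=
      hcol u (Relation.EqvGen.refl u)
    cases hF : C.F i false u with
    | none =>
      have h1 : C.phiH i u = 0 := ((C.F_none i u).1).mp hF
      have h2 : C.phiP i u = 0 := ((C.F_none i u).2).mp (hFeq ▸ hF)
      rcases C.B1 i u with ⟨_, _, _, _, _, h3, _⟩ | ⟨_, h3, _⟩ <;> omega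
    | some y =>
      have hFp : C.F i true u = some y := hFeq ▸ hF
      have h1 := C.fstep' i false u y hF
      have h2 := C.FstepP i u y hFp
      have hcoly : C.Collapsed i y := fun x hx =>
        hcol x (Relation.EqvGen.trans u y x (Relation.EqvGen.rel u y ⟨false, hF⟩) hx)
      have := ih y (by omega) hcoly
      omega

lemma top_exists (i : Fin (n - 1)) :
    ∀ (k : ℕ) (v : C.B), C.eps i v = k →
      ∃ t, C.SameString i v t ∧ C.eps i t = 0 := by
  intro k
  induction k with
  | zero => intro v hv; exact ⟨v, Relation.EqvGen.refl v, hv⟩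
  | succ k ih =>
    intro v hv
    obtain ⟨p, t, ht⟩ := C.parent_exists i v (by omega)
    have h1 := C.estep i p v t ht
    obtain ⟨t', h2, h3⟩ := ih t (by omega)
    have hFt : C.F i p t = some v := (C.inverse i p t v).mpr ht
    exact ⟨t', Relation.EqvGen.trans v t t'
      (Relation.EqvGen.symm t v (Relation.EqvGen.rel t v ⟨p, hFt⟩)) h2, h3⟩

lemma wt_of_collapsed (i : Fin (n - 1)) (v : C.B) (h : C.Collapsed i v) :
    C.wt v (co i) = C.eps i v := by
  obtain ⟨t, hst, het⟩ := C.top_exists i (C.eps i v) v rfl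
  have hD := C.D_const i v t hst
  have hcolt : C.Collapsed i t := fun x hx =>
    h x (Relation.EqvGen.trans v t x hst hx)
  have hwt : C.wt t (co i) = 0 := by
    rcases C.B1 i t with ⟨_, _, _, _, _, _, h1, _⟩ | ⟨h1, h2, h3⟩
    · exact h1.mp het
    · -- separated branch at the top: contradiction with collapsedness
      have hphiP : C.phiP i t = 1 := by omega
      have hFt : C.F i true t ≠ none := by
        intro hc
        have := ((C.F_none i t).2).mp hc
        omega
      have hle := C.phi_le_phiP i (C.phi i t) t rfl hcolt
      have hphiH : C.phiH i t = 0 := by omega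
      have hFf : C.F i false t = none := ((C.F_none i t).1).mpr hphiH
      exact absurd (hcolt t (Relation.EqvGen.refl t)) (by rw [hFf]; exact fun hc => hFt hc.symm)
  omega

end DoubledCrystal

/-- **Lemma (collapsed adjacent strings, parts (i) and (ii)).**
Let `w → z` be an edge labeled `1` or `1'` in a doubled crystal.  If
`φ_2(z) = φ_2(w) + 1`, then the `{2,2'}`-string through `w` is collapsed if
and only if the `{2,2'}`-string through `z` is collapsed.  If instead
`φ_2(z) = φ_2(w)`, then the `{2,2'}`-string through `z` is separated
(not collapsed).  (Label `1` is index `0`, label `2` is index `1`.) -/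
theorem doubledCrystal_collapsed_adjacent_strings_12 {n : ℕ} (hn : 3 ≤ n)
    (C : DoubledCrystal n) (w z : C.B) (p : Bool)
    (hedge : C.F ⟨0, by omega⟩ p w = some z) :
    (C.phi ⟨1, by omega⟩ z = C.phi ⟨1, by omega⟩ w + 1 →
      (C.Collapsed ⟨1, by omega⟩ w ↔ C.Collapsed ⟨1, by omega⟩ z)) ∧
    (C.phi ⟨1, by omega⟩ z = C.phi ⟨1, by omega⟩ w →
      ¬ C.Collapsed ⟨1, by omega⟩ z) := by
  have hE : C.E ⟨0, by omega⟩ p z = some w := (C.inverse _ p w z).mp hedge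
  have hco : DoubledCrystal.co (⟨1, by omega⟩ : Fin (n-1)) = (⟨2, by omega⟩ : Fin n) := rfl
  have hwt : C.wt w (DoubledCrystal.co ⟨1, by omega⟩) = C.wt z (DoubledCrystal.co ⟨1, by omega⟩) := by
    have h2 := C.K1wt ⟨0, by omega⟩ p z w hE (DoubledCrystal.co ⟨1, by omega⟩)
    have hc1 : ((DoubledCrystal.co (⟨1, by omega⟩ : Fin (n-1)) : Fin n) : ℕ) = 2 := rfl
    have hc2 : ((⟨0, by omega⟩ : Fin (n-1)) : ℕ) = 0 := rfl
    rw [hc1, hc2, if_neg (by omega), if_neg (by omega)] at h2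
    omega
  have hB3 := C.B3 ⟨1, by omega⟩ ⟨0, by omega⟩ p w z (Or.inl rfl) hedge
  constructor
  · intro hphi
    rcases hB3 with ⟨he, _⟩ | ⟨he, hp2⟩
    · constructor
      · intro h
        exact C.collapsed_of_wt _ z
          (by have := C.wt_of_collapsed _ w h; omega)
      · intro h
        exact C.collapsed_of_wt _ w
          (by have := C.wt_of_collapsed _ z h; omega)
    · omega
  · intro hphi hcol
    rcases hB3 with ⟨_, hp1⟩ | ⟨he, _⟩
    · omega
    · have h1 := C.wt_of_collapsed _ z hcol
      have h2 := C.eps_le_wt ⟨1, by omega⟩ (C.eps ⟨1, by omega⟩ w) w rfl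
      omega
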